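/- Special case of the decoupling identity (T = identity, f ≡ 1): for θ ∈ C(m) and matrices B₁,...,B_m, (−1)^{|θ|} ∑_{σ ∈ C(θ)} (−1)^{|θ|−|σ|} B⃗_σ(x) B⃗_{(θ−σ)^t}(y) = ∑_{σ ∈ C(θ)} [∑_{α ∈ C(σ)} (−1)^{|θ|−|α|} B⃗_α(x)(m_Q B⃗)_{(σ−α)^t}] · [∑_{β ∈ C(σ^c)} (−1)^{|θ|−|β|} (m_Q B⃗)_β B⃗_{(σ^c−β)^t}(y)]. -/

import Mathlib

open Finset MeasureTheory

/-- Reverse-ordered product `B⃗_s = B_{s(j)} ⋯ B_{s(1)}` (indices in decreasing order). -/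
noncomputable def prodRev {n : ℕ} (B : ℕ → Matrix (Fin n) (Fin n) ℂ) (s : Finset ℕ) :
    Matrix (Fin n) (Fin n) ℂ :=
  (((s.sort (· ≤ ·)).reverse).map B).prod

/-- Forward product `B⃗_{s^t} = B_{s(1)} ⋯ B_{s(j)}` (indices in increasing order). -/
noncomputable def prodFwd {n : ℕ} (B : ℕ → Matrix (Fin n) (Fin n) ℂ) (s : Finset ℕ) :
    Matrix (Fin n) (Fin n) ℂ :=
  ((s.sort (· ≤ ·)).map B).prod

/-! Write `(a ⋆ b)(θ) = ∑_{σ ⊆ θ} a(σ) b(θ \ σ)` for the subset convolution, which is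
associative, and `±A⃗` for `s ↦ (-1)^{|s|} A⃗_s`. Up to a global sign, the left side is
`(±B⃗(x) ⋆ B⃗ᵗ(y))(θ)` and the right side is `((±B⃗(x) ⋆ M⃗ᵗ) ⋆ (±M⃗ ⋆ B⃗ᵗ(y)))(θ)` for the
constant matrices `M`. Since `M⃗ᵗ ⋆ ±M⃗` is the unit `δ_∅`, associativity collapses the right
side to the left one. -/

theorem Finset.sort_insert_of_forall_lt {α : Type*} [LinearOrder α] {u : α} {s : Finset α}
    (h : ∀ x ∈ s, x < u) : (insert u s).sort (· ≤ ·) = s.sort (· ≤ ·) ++ [u] := by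
  refine (insert u s).sortedLT_sort.eq_of_mem_iff ?_ (by simp [or_comm])
  refine List.Pairwise.sortedLT <|
    List.pairwise_append.2 ⟨s.sortedLT_sort.pairwise, List.pairwise_singleton _ u, ?_⟩
  simpa using h

theorem Finset.sum_powerset_sum_powerset_eq_sum_sdiff_powerset {ι M : Type*} [DecidableEq ι]
    [AddCommMonoid M] (θ : Finset ι) (F : Finset ι → Finset ι → M) :
    ∑ σ ∈ θ.powerset, ∑ α ∈ σ.powerset, F σ α =
      ∑ α ∈ θ.powerset, ∑ τ ∈ (θ \ α).powerset, F (α ∪ τ) α := by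
  rw [sum_comm' (t' := θ.powerset) (s' := fun α => Icc α θ) (fun σ α => by
    simp only [mem_powerset, mem_Icc]; tauto)]
  refine sum_congr rfl fun α hα => ?_
  rw [Icc_eq_image_powerset (mem_powerset.1 hα), sum_image]
  intro τ₁ h₁ τ₂ h₂ h
  rw [← union_sdiff_cancel_left (subset_sdiff.1 (mem_powerset.1 h₁)).2.symm,
    ← union_sdiff_cancel_left (subset_sdiff.1 (mem_powerset.1 h₂)).2.symm]
  exact congrArg (· \ α) h

theorem neg_one_pow_sub_of_le {R : Type*} [Monoid R] [HasDistribNeg R] {k l : ℕ} (h : l ≤ k) :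
    (-1 : R) ^ (k - l) = (-1) ^ k * (-1) ^ l := by
  conv_rhs => rw [← Nat.sub_add_cancel h, pow_add, mul_assoc, ← pow_add, ← two_mul, pow_mul]
  simp

section SubsetConv

variable {ι R : Type*} [DecidableEq ι]

def subsetConv [Mul R] [AddCommMonoid R] (f g : Finset ι → R) (s : Finset ι) : R :=
  ∑ t ∈ s.powerset, f t * g (s \ t)

theorem subsetConv_assoc [NonUnitalSemiring R] (f g h : Finset ι → R) :
    subsetConv (subsetConv f g) h = subsetConv f (subsetConv g h) := by
  ext θ
  simp only [subsetConv, sum_mul, mul_sum, mul_assoc]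
  rw [sum_powerset_sum_powerset_eq_sum_sdiff_powerset]
  refine sum_congr rfl fun α _ => sum_congr rfl fun τ hτ => ?_
  rw [union_sdiff_cancel_left (subset_sdiff.1 (mem_powerset.1 hτ)).2.symm,
    sdiff_sdiff_left, sup_eq_union]

theorem subsetConv_single_empty_left [NonAssocSemiring R] (g : Finset ι → R) :
    subsetConv (Pi.single ∅ 1) g = g := by
  ext s
  rw [subsetConv, sum_eq_single_of_mem ∅ (empty_mem_powerset s) fun t _ ht => by
    simp [ht]]
  simp

theorem subsetConv_subsetConv_of_subsetConv_eq_single [Semiring R] (a b c d : Finset ι → R)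
    (hbc : subsetConv b c = Pi.single ∅ 1) :
    subsetConv (subsetConv a b) (subsetConv c d) = subsetConv a d := by
  rw [subsetConv_assoc, ← subsetConv_assoc b, hbc, subsetConv_single_empty_left]

theorem neg_one_pow_card_smul_subsetConv {K : Type*} [Ring K] [Ring R] [Module K R]
    [IsScalarTower K R R] {θ U : Finset ι} (hU : U ⊆ θ) (f g : Finset ι → R) :
    ((-1 : K) ^ θ.card) • subsetConv (fun s => ((-1 : K) ^ s.card) • f s) g U =
      ∑ α ∈ U.powerset, ((-1 : K) ^ (θ.card - α.card)) • (f α * g (U \ α)) := by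
  rw [subsetConv, smul_sum]
  refine sum_congr rfl fun α hα => ?_
  rw [neg_one_pow_sub_of_le (card_le_card ((mem_powerset.1 hα).trans hU)), smul_mul_assoc,
    smul_smul]

end SubsetConv

section MatrixProducts

variable {n : ℕ}

@[simp] theorem prodFwd_empty (M : ℕ → Matrix (Fin n) (Fin n) ℂ) : prodFwd M ∅ = 1 := by
  simp [prodFwd]

@[simp] theorem prodRev_empty (M : ℕ → Matrix (Fin n) (Fin n) ℂ) : prodRev M ∅ = 1 := by
  simp [prodRev]

theorem prodFwd_insert_of_forall_lt (M : ℕ → Matrix (Fin n) (Fin n) ℂ) {u : ℕ} {s : Finset ℕ}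
    (h : ∀ x ∈ s, x < u) : prodFwd M (insert u s) = prodFwd M s * M u := by
  simp [prodFwd, sort_insert_of_forall_lt h]

theorem prodRev_insert_of_forall_lt (M : ℕ → Matrix (Fin n) (Fin n) ℂ) {u : ℕ} {s : Finset ℕ}
    (h : ∀ x ∈ s, x < u) : prodRev M (insert u s) = M u * prodRev M s := by
  simp [prodRev, sort_insert_of_forall_lt h]

/-- Splitting off the largest index `u`, the terms for `γ` and `insert u γ` cancel in pairs. -/
theorem subsetConv_prodFwd_neg_one_pow_smul_prodRev (M : ℕ → Matrix (Fin n) (Fin n) ℂ) :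
    subsetConv (prodFwd M) (fun s => ((-1 : ℂ) ^ s.card) • prodRev M s) = Pi.single ∅ 1 := by
  ext1 U
  induction U using Finset.induction_on_max with
  | empty => simp [subsetConv]
  | insert u V hlt _ =>
    have huV : u ∉ V := fun hu => (hlt u hu).false
    rw [Pi.single_eq_of_ne (insert_ne_empty u V), subsetConv, sum_powerset_insert huV,
      ← sum_add_distrib]
    refine sum_eq_zero fun γ hγ => ?_
    have hγV : γ ⊆ V := mem_powerset.1 hγ
    have huγ : u ∉ γ := fun hu => huV (hγV hu)
    rw [insert_sdiff_of_notMem _ huγ, insert_sdiff_insert, sdiff_insert_of_notMem huV,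
      prodRev_insert_of_forall_lt M fun x hx => hlt x (mem_sdiff.1 hx).1,
      prodFwd_insert_of_forall_lt M fun x hx => hlt x (hγV hx),
      card_insert_of_notMem (fun hu => huV (mem_sdiff.1 hu).1), pow_succ, mul_neg_one, neg_smul,
      mul_neg]
    simp only [mul_smul_comm, mul_assoc, neg_add_cancel]

end MatrixProducts

theorem decoupling_identity_matrices_general {d n : ℕ}
    (B : ℕ → (Fin d → ℝ) → Matrix (Fin n) (Fin n) ℂ)
    (θ : Finset ℕ)
    (Mc : ℕ → Matrix (Fin n) (Fin n) ℂ)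
    (x y : Fin d → ℝ) :
    ((-1 : ℂ) ^ θ.card) •
        ∑ σ ∈ θ.powerset, ((-1 : ℂ) ^ (θ.card - σ.card)) •
          (prodRev (fun i => B i x) σ * prodFwd (fun i => B i y) (θ \ σ)) =
      ∑ σ ∈ θ.powerset,
        (∑ α ∈ σ.powerset, ((-1 : ℂ) ^ (θ.card - α.card)) •
            (prodRev (fun i => B i x) α * prodFwd Mc (σ \ α))) *
        (∑ β ∈ (θ \ σ).powerset, ((-1 : ℂ) ^ (θ.card - β.card)) •
            (prodRev Mc β * prodFwd (fun i => B i y) ((θ \ σ) \ β))) := by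
  set X := prodRev fun i => B i x
  set Y := prodFwd fun i => B i y
  have hsq : ((-1 : ℂ) ^ θ.card) * (-1) ^ θ.card = 1 := by rw [← mul_pow]; simp
  rw [← neg_one_pow_card_smul_subsetConv subset_rfl X Y, smul_smul, hsq, one_smul,
    ← subsetConv_subsetConv_of_subsetConv_eq_single _ _ _ _
      (subsetConv_prodFwd_neg_one_pow_smul_prodRev Mc)]
  refine sum_congr rfl fun σ hσ => ?_
  rw [← neg_one_pow_card_smul_subsetConv (mem_powerset.1 hσ),
    ← neg_one_pow_card_smul_subsetConv sdiff_subset, smul_mul_smul_comm, hsq, one_smul]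

/-- decoupling identity, special case `T = id`, `f ≡ 1`.
For a tuple `θ ∈ C(m)` and matrix symbols `B₁, …, B_m`, with `Mc` the tuple of
entrywise averages over a finite-measure set `Q`,
`(−1)^{|θ|} ∑_{σ≤θ} (−1)^{|θ|−|σ|} B⃗_σ(x) B⃗_{(θ−σ)^t}(y)` equals the decoupled
double sum. -/
theorem decoupling_identity_matrices {d n m : ℕ}
    (B : ℕ → (Fin d → ℝ) → Matrix (Fin n) (Fin n) ℂ)
    (θ : Finset ℕ) (hθ : θ ⊆ Finset.Icc 1 m)
    (Q : Set (Fin d → ℝ)) (hQmeas : MeasurableSet Q) (hQfin : volume Q < ⊤)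
    (Mc : ℕ → Matrix (Fin n) (Fin n) ℂ)
    (hMc : ∀ i k l, Mc i k l = ⨍ y in Q, B i y k l)
    (x y : Fin d → ℝ) :
    ((-1 : ℂ) ^ θ.card) •
        ∑ σ ∈ θ.powerset, ((-1 : ℂ) ^ (θ.card - σ.card)) •
          (prodRev (fun i => B i x) σ * prodFwd (fun i => B i y) (θ \ σ)) =
      ∑ σ ∈ θ.powerset,
        (∑ α ∈ σ.powerset, ((-1 : ℂ) ^ (θ.card - α.card)) •
            (prodRev (fun i => B i x) α * prodFwd Mc (σ \ α))) *
        (∑ β ∈ (θ \ σ).powerset, ((-1 : ℂ) ^ (θ.card - β.card)) •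
            (prodRev Mc β * prodFwd (fun i => B i y) ((θ \ σ) \ β))) :=
  decoupling_identity_matrices_general B θ Mc x y
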